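/- Let n, d ∈ ℕ, σ > 0, and let g : {0,1}^n × ℝ^d → {0,1} be measurable in its second argument for each first argument. For b ∈ {0,1}^n and x ∈ ℝ^d define h(b, x) = P(g(b, x + ε) = 1), where ε is a random vector in ℝ^d with i.i.d. N(0,σ²) coordinates, and define the inner smoothed classifier g̃_X(b, x) = 1 if h(b, x) > 1/2 and g̃_X(b, x) = 0 otherwise. Fix x ∈ ℝ^d and suppose that for every b ∈ {0,1}^n one has 0 < h(b, x) < 1 and h(b, x) ≠ 1/2. Let ε_X > 0 satisfy ε_X < σ · |Φ⁻¹(h(b, x))| for every b ∈ {0,1}^n. Then for every δ ∈ ℝ^d with ‖δ‖₂ ≤ ε_X and every b ∈ {0,1}^n, g̃_X(b, x + δ) = g̃_X(b, x); consequently, for any random vector Γ in {0,1}^n and any a ∈ {0,1}^n, P(g̃_X(a ⊕ Γ, x + δ) = 1) = P(g̃_X(a ⊕ Γ, x) = 1), so the doubly smoothed classifier g̃_{A,X}(a, x) = argmax_{c ∈ {0,1}} P(g̃_X(a ⊕ Γ, x) = c) satisfies g̃_{A,X}(a, x + δ) = g̃_{A,X}(a, x). -/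

import Mathlib

open MeasureTheory ProbabilityTheory
open scoped ENNReal

/-- The cumulative distribution function `Φ` of the standard Gaussian measure `N(0,1)` on `ℝ`. -/
noncomputable def Phi (x : ℝ) : ℝ := ((gaussianReal 0 1) (Set.Iic x)).toReal

/-- The inverse `Φ⁻¹` of the standard Gaussian CDF on `(0,1)`. -/
noncomputable def PhiInv (p : ℝ) : ℝ := Function.invFun Phi p

/-!
Rescaling turns `h b y` into the probability that `y + σ Z` lies in `{g b = true}`, with `Z`
standard Gaussian. Shifting `Z` by `u` multiplies its law by the density
`exp (⟪u, z⟫ - ‖u‖² / 2)`, an increasing function of `⟪u, z⟫`; by the Neyman–Pearson lemma the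
half-space `{⟪u, z⟫ ≤ ‖u‖ r}` therefore keeps the least mass under the shift among all sets of
at least its Gaussian mass `Φ r`, so `Φ r ≤ P(Z ∈ A)` implies `Φ (r - ‖u‖) ≤ P(Z + u ∈ A)`. Taking
`r = ±Φ⁻¹(h b x)` and `u = δ / σ` keeps `h b (x + δ)` on the same side of `1/2` as `h b x`, so
`g̃_X` is unchanged; the doubly smoothed classifier depends only on `g̃_X`.
-/

open Real Set

lemma ProbabilityTheory.continuous_cdf (μ : Measure ℝ) [IsProbabilityMeasure μ] [NullSingletonClass μ] :
    Continuous (cdf μ) := by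
  refine continuous_iff_continuousAt.2 fun x => ?_
  rw [(monotone_cdf μ).continuousAt_iff_leftLim_eq_rightLim, (cdf μ).rightLim_eq]
  have h := (cdf μ).measure_singleton x
  rw [measure_cdf, measure_singleton, eq_comm, ENNReal.ofReal_eq_zero, sub_nonpos] at h
  exact le_antisymm ((monotone_cdf μ).leftLim_le le_rfl) h

lemma Phi_eq_cdf : Phi = cdf (gaussianReal 0 1) :=
  funext fun x => (cdf_eq_real _ x).symm

lemma continuous_Phi : Continuous Phi := by
  have := nullSingletonClass_gaussianReal (μ := 0) one_ne_zero
  rw [Phi_eq_cdf]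
  exact continuous_cdf _

lemma strictMono_Phi : StrictMono Phi := by
  intro a b hab
  have hpos : gaussianReal 0 1 (Ioc a b) ≠ 0 := fun h =>
    hab.not_ge (by simpa using gaussianReal_absolutelyContinuous' 0 one_ne_zero h)
  rw [← measure_cdf (gaussianReal 0 1), StieltjesFunction.measure_Ioc, Ne, ENNReal.ofReal_eq_zero,
    not_le, sub_pos] at hpos
  rwa [Phi_eq_cdf]

lemma Phi_PhiInv {p : ℝ} (h0 : 0 < p) (h1 : p < 1) : Phi (PhiInv p) = p := by
  refine Function.invFun_eq (mem_range_of_exists_le_of_exists_ge continuous_Phi ?_ ?_)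
  · rw [Phi_eq_cdf]
    exact ((tendsto_cdf_atBot _).eventually (eventually_le_nhds h0)).exists
  · rw [Phi_eq_cdf]
    exact ((tendsto_cdf_atTop _).eventually (eventually_ge_nhds h1)).exists

lemma Phi_neg (t : ℝ) : Phi (-t) = 1 - Phi t := by
  have := nullSingletonClass_gaussianReal (μ := 0) one_ne_zero
  have hsymm : gaussianReal 0 1 (Iic (-t)) = gaussianReal 0 1 (Iic t)ᶜ := by
    conv_lhs => rw [← neg_zero, ← gaussianReal_map_neg]
    rw [Measure.map_apply measurable_neg measurableSet_Iic, compl_Iic, measure_congr Ioi_ae_eq_Ici]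
    congr 1
    ext
    simp
  rw [Phi, hsymm, ← measureReal_def, probReal_compl_eq_one_sub measurableSet_Iic, Phi,
    measureReal_def]

lemma Phi_zero : Phi 0 = 1 / 2 := by
  linarith [neg_zero (G := ℝ) ▸ Phi_neg 0]

lemma half_lt_Phi_iff {t : ℝ} : 1 / 2 < Phi t ↔ 0 < t := by
  rw [← Phi_zero, strictMono_Phi.lt_iff_lt]

lemma MeasureTheory.Measure.pi_withDensity {ι : Type*} [Fintype ι] {α : ι → Type*}
    [∀ i, MeasurableSpace (α i)] (μ : ∀ i, Measure (α i)) [∀ i, IsProbabilityMeasure (μ i)]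
    {f : ∀ i, α i → ℝ≥0∞} (hf : ∀ i, Measurable (f i))
    [∀ i, SigmaFinite ((μ i).withDensity (f i))] :
    Measure.pi (fun i => (μ i).withDensity (f i))
      = (Measure.pi μ).withDensity (fun x => ∏ i, f i (x i)) := by
  refine Measure.pi_eq fun s hs => ?_
  have hind : ∀ x, (univ.pi s).indicator (fun x => ∏ i, f i (x i)) x
      = ∏ i, (s i).indicator (f i) (x i) := fun x => by
    by_cases hx : x ∈ univ.pi s
    · rw [indicator_of_mem hx]
      exact Finset.prod_congr rfl fun i _ => (indicator_of_mem (hx i (mem_univ i)) _).symm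
    · obtain ⟨i, hi⟩ : ∃ i, x i ∉ s i := by simpa [mem_univ_pi] using hx
      rw [indicator_of_notMem hx]
      exact (Finset.prod_eq_zero (Finset.mem_univ i) (indicator_of_notMem hi _)).symm
  have hmeas : ∀ i, Measurable ((s i).indicator (f i)) := fun i => (hf i).indicator (hs i)
  rw [withDensity_apply _ (.univ_pi hs), ← lintegral_indicator (.univ_pi hs), lintegral_congr hind,
    lintegral_prod_eq_prod_lintegral_of_indepFun _ _ (iIndepFun_pi fun i => (hmeas i).aemeasurable)
      fun i => (hmeas i).comp (measurable_pi_apply i)]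
  refine Finset.prod_congr rfl fun i _ => ?_
  rw [(measurePreserving_eval μ i).lintegral_comp (hmeas i), lintegral_indicator (hs i),
    withDensity_apply _ (hs i)]

lemma MeasurableEquiv.map_withDensity {α β : Type*} [MeasurableSpace α] [MeasurableSpace β]
    (e : α ≃ᵐ β) (μ : Measure α) (f : α → ℝ≥0∞) :
    (μ.withDensity f).map e = (μ.map e).withDensity (f ∘ e.symm) := by
  ext s hs
  rw [e.map_apply, withDensity_apply _ (e.measurable hs), withDensity_apply _ hs, e.restrict_map,
    lintegral_map_equiv]
  simp

/-- The Neyman–Pearson lemma. -/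
lemma withDensity_apply_le_withDensity_apply {α : Type*} [MeasurableSpace α] {μ : Measure α}
    [IsFiniteMeasure μ] {ρ : α → ℝ≥0∞} {c : ℝ≥0∞} {H A : Set α} (hH : MeasurableSet H)
    (hA : MeasurableSet A) (hρH : ∀ x ∈ H, ρ x ≤ c) (hρHc : ∀ x ∉ H, c ≤ ρ x) (hμ : μ H ≤ μ A) :
    μ.withDensity ρ H ≤ μ.withDensity ρ A := by
  have hdiff : μ (H \ A) ≤ μ (A \ H) := by
    rw [← measure_inter_add_sdiff H hA, ← measure_inter_add_sdiff A hH, inter_comm A H] at hμ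
    exact (ENNReal.add_le_add_iff_left (measure_ne_top _ _)).1 hμ
  calc μ.withDensity ρ H = μ.withDensity ρ (A ∩ H) + μ.withDensity ρ (H \ A) := by
        rw [inter_comm, measure_inter_add_sdiff H hA]
    _ ≤ μ.withDensity ρ (A ∩ H) + μ.withDensity ρ (A \ H) := by
        refine add_le_add_right ?_ _
        calc μ.withDensity ρ (H \ A) ≤ ∫⁻ _ in H \ A, c ∂μ := by
              rw [withDensity_apply _ (hH.diff hA)]
              exact setLIntegral_mono' (hH.diff hA) fun x hx => hρH x hx.1
          _ ≤ ∫⁻ _ in A \ H, c ∂μ := by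
              rw [setLIntegral_const, setLIntegral_const]
              gcongr
          _ ≤ μ.withDensity ρ (A \ H) := by
              rw [withDensity_apply _ (hA.diff hH)]
              exact setLIntegral_mono' (hA.diff hH) fun x hx => hρHc x hx.2
    _ = μ.withDensity ρ A := measure_inter_add_sdiff A hH

lemma gaussianReal_eq_withDensity (c : ℝ) :
    gaussianReal c 1
      = (gaussianReal 0 1).withDensity (fun t => ENNReal.ofReal (exp (c * t - c ^ 2 / 2))) := by
  rw [gaussianReal_of_var_ne_zero _ one_ne_zero, gaussianReal_of_var_ne_zero _ one_ne_zero,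
    ← withDensity_mul _ (measurable_gaussianPDF _ _) (by fun_prop)]
  congr 1
  funext t
  simp only [Pi.mul_apply, gaussianPDF, gaussianPDFReal, ← ENNReal.ofReal_mul' (exp_pos _).le]
  rw [mul_assoc _ (rexp _), ← exp_add]
  congr 3
  push_cast
  ring

lemma stdGaussian_map_inner {E : Type*} [NormedAddCommGroup E] [InnerProductSpace ℝ E]
    [FiniteDimensional ℝ E] [MeasurableSpace E] [BorelSpace E] {e : E} (he : ‖e‖ = 1) :
    (stdGaussian E).map (fun z => inner ℝ e z) = gaussianReal 0 1 := by
  have h := IsGaussian.map_eq_gaussianReal (μ := stdGaussian E) (innerSL ℝ e)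
  rw [integral_strongDual_stdGaussian, variance_dual_stdGaussian, innerSL_apply_norm, he] at h
  simpa using h

section EuclideanSpace

variable {ι : Type*} [Fintype ι]

open WithLp in
lemma stdGaussian_map_add_eq_withDensity (u : EuclideanSpace ℝ ι) :
    (stdGaussian (EuclideanSpace ℝ ι)).map (· + u)
      = (stdGaussian _).withDensity
          (fun z => ENNReal.ofReal (exp (inner ℝ u z - ‖u‖ ^ 2 / 2))) := by
  set P := Measure.pi fun _ : ι => gaussianReal 0 1 with hP
  set f : ι → ℝ → ℝ≥0∞ := fun i t => ENNReal.ofReal (exp (u i * t - u i ^ 2 / 2))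
  have : ∀ i, SigmaFinite ((gaussianReal 0 1).withDensity (f i)) := fun i => by
    rw [← gaussianReal_eq_withDensity]
    infer_instance
  have hshift : P.map (fun y => y + ofLp u) = P.withDensity (fun y => ∏ i, f i (y i)) := by
    calc P.map (fun y => y + ofLp u) = Measure.pi fun i => gaussianReal (u i) 1 := by
          rw [show (fun y => y + ofLp u) = fun y i => y i + u i from rfl, hP,
            Measure.pi_map_pi (f := fun i t => t + u i) fun i => by fun_prop]
          simp [gaussianReal_map_add_const]
      _ = Measure.pi fun i => (gaussianReal 0 1).withDensity (f i) := by
          congr with i : 1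
          exact gaussianReal_eq_withDensity (u i)
      _ = _ := Measure.pi_withDensity _ fun i => by fun_prop
  have he : (MeasurableEquiv.toLp 2 (ι → ℝ) : (ι → ℝ) → EuclideanSpace ℝ ι) = toLp 2 := rfl
  rw [← map_pi_eq_stdGaussian, Measure.map_map (by fun_prop) (by fun_prop),
    show (· + u) ∘ toLp 2 = toLp 2 ∘ (fun y => y + ofLp u) from rfl,
    ← Measure.map_map (by fun_prop) (by fun_prop), hshift, ← he, MeasurableEquiv.map_withDensity]
  congr 1
  funext z
  simp only [Function.comp_apply, f]
  rw [← ENNReal.ofReal_prod_of_nonneg fun i _ => (exp_pos _).le, ← exp_sum,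
    Finset.sum_sub_distrib, ← Finset.sum_div, EuclideanSpace.real_norm_sq_eq, PiLp.inner_apply]
  simp [mul_comm]

lemma Phi_sub_norm_le_stdGaussian_map_add {A : Set (EuclideanSpace ℝ ι)} (hA : MeasurableSet A)
    (u : EuclideanSpace ℝ ι) {r : ℝ} (hr : Phi r ≤ (stdGaussian _).real A) :
    Phi (r - ‖u‖) ≤ ((stdGaussian _).map (· + u)).real A := by
  set γ := stdGaussian (EuclideanSpace ℝ ι)
  rcases eq_or_ne u 0 with rfl | hu
  · simpa using hr
  have hu' : 0 < ‖u‖ := norm_pos_iff.2 hu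
  have hunit : ‖‖u‖⁻¹ • u‖ = 1 := by
    rw [norm_smul, norm_inv, norm_norm, inv_mul_cancel₀ hu'.ne']
  have hlaw : ∀ t, γ {z | inner ℝ u z ≤ ‖u‖ * t} = ENNReal.ofReal (Phi t) := fun t => by
    have hset : {z | inner ℝ u z ≤ ‖u‖ * t} = (fun z => inner ℝ (‖u‖⁻¹ • u) z) ⁻¹' Iic t := by
      ext z
      simp [real_inner_smul_left, inv_mul_le_iff₀ hu']
    rw [hset, ← Measure.map_apply (by fun_prop) measurableSet_Iic,
      stdGaussian_map_inner hunit, Phi, ENNReal.ofReal_toReal (measure_ne_top _ _)]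
  set H := {z | inner ℝ u z ≤ ‖u‖ * r}
  have hH : MeasurableSet H := measurableSet_le (by fun_prop) (by fun_prop)
  have hshiftH : (· + u) ⁻¹' H = {z | inner ℝ u z ≤ ‖u‖ * (r - ‖u‖)} := by
    ext z
    simp only [H, preimage_ofPred_eq, mem_ofPred_eq, inner_add_right, real_inner_self_eq_norm_sq]
    rw [mul_sub, ← sq, le_sub_iff_add_le]
  set ρ := fun z => ENNReal.ofReal (exp (inner ℝ u z - ‖u‖ ^ 2 / 2))
  set c := ENNReal.ofReal (exp (‖u‖ * r - ‖u‖ ^ 2 / 2))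
  have hρH : ∀ z ∈ H, ρ z ≤ c := fun z (hz : inner ℝ u z ≤ ‖u‖ * r) =>
    ENNReal.ofReal_le_ofReal (exp_le_exp.2 (by linarith))
  have hρHc : ∀ z ∉ H, c ≤ ρ z := fun z (hz : ¬inner ℝ u z ≤ ‖u‖ * r) =>
    ENNReal.ofReal_le_ofReal (exp_le_exp.2 (by linarith [not_le.1 hz]))
  have key := withDensity_apply_le_withDensity_apply hH hA hρH hρHc
    (by rw [hlaw]; exact ENNReal.ofReal_le_of_le_toReal hr)
  rw [← stdGaussian_map_add_eq_withDensity, Measure.map_apply (by fun_prop) hH, hshiftH,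
    hlaw] at key
  exact (ENNReal.ofReal_le_iff_le_toReal (measure_ne_top _ _)).1 key

lemma map_toLp_pi_gaussianReal (σ : ℝ) :
    (Measure.pi fun _ : ι => gaussianReal 0 ⟨σ ^ 2, sq_nonneg σ⟩).map
        (MeasurableEquiv.toLp 2 (ι → ℝ))
      = (stdGaussian (EuclideanSpace ℝ ι)).map (σ • ·) := by
  rw [← map_pi_eq_stdGaussian, Measure.map_map (by fun_prop) (by fun_prop),
    show (σ • ·) ∘ WithLp.toLp 2 = WithLp.toLp 2 ∘ fun y : ι → ℝ => fun i => σ * y i from rfl,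
    ← Measure.map_map (by fun_prop) (by fun_prop),
    Measure.pi_map_pi (f := fun _ t => σ * t) fun _ => by fun_prop]
  congr with i : 1
  rw [gaussianReal_map_const_mul, mul_zero, mul_one]
  rfl

noncomputable def gaussianSmoothedProb (σ : ℝ) (S : Set (EuclideanSpace ℝ ι))
    (x : EuclideanSpace ℝ ι) : ℝ :=
  ((stdGaussian (EuclideanSpace ℝ ι)).map (σ • ·)).real {e | x + e ∈ S}

variable {σ : ℝ} {S : Set (EuclideanSpace ℝ ι)}

lemma gaussianSmoothedProb_compl (hS : MeasurableSet S) (x : EuclideanSpace ℝ ι) :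
    gaussianSmoothedProb σ Sᶜ x = 1 - gaussianSmoothedProb σ S x := by
  have : IsProbabilityMeasure ((stdGaussian (EuclideanSpace ℝ ι)).map (σ • ·)) :=
    Measure.isProbabilityMeasure_map (by fun_prop)
  exact probReal_compl_eq_one_sub (hS.preimage (by fun_prop))

lemma Phi_sub_le_gaussianSmoothedProb_add (hS : MeasurableSet S) (hσ : 0 < σ)
    (x δ : EuclideanSpace ℝ ι) {r : ℝ} (hr : Phi r ≤ gaussianSmoothedProb σ S x) :
    Phi (r - ‖δ‖ / σ) ≤ gaussianSmoothedProb σ S (x + δ) := by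
  have hT : ∀ y, MeasurableSet {e : EuclideanSpace ℝ ι | y + e ∈ S} := fun y =>
    hS.preimage (by fun_prop)
  have hA : MeasurableSet {z : EuclideanSpace ℝ ι | x + σ • z ∈ S} := hS.preimage (by fun_prop)
  have hu : ‖σ⁻¹ • δ‖ = ‖δ‖ / σ := by
    rw [norm_smul, norm_inv, Real.norm_of_nonneg hσ.le, inv_mul_eq_div]
  rw [gaussianSmoothedProb, map_measureReal_apply (by fun_prop) (hT x)] at hr
  rw [gaussianSmoothedProb, map_measureReal_apply (by fun_prop) (hT (x + δ))]
  have key := Phi_sub_norm_le_stdGaussian_map_add hA (σ⁻¹ • δ) hr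
  rw [hu, map_measureReal_apply (by fun_prop) hA] at key
  convert key using 2
  ext z
  simp [smul_add, smul_inv_smul₀ hσ.ne', add_assoc, add_comm δ]

lemma half_lt_gaussianSmoothedProb_add (hS : MeasurableSet S) (hσ : 0 < σ)
    {x δ : EuclideanSpace ℝ ι} {r : ℝ} (hr : Phi r ≤ gaussianSmoothedProb σ S x)
    (hδ : ‖δ‖ < σ * r) : 1 / 2 < gaussianSmoothedProb σ S (x + δ) := by
  refine lt_of_lt_of_le ?_ (Phi_sub_le_gaussianSmoothedProb_add hS hσ x δ hr)
  rw [half_lt_Phi_iff, sub_pos, div_lt_iff₀ hσ, mul_comm]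
  exact hδ

lemma half_lt_gaussianSmoothedProb_add_iff (hS : MeasurableSet S) (hσ : 0 < σ)
    {x δ : EuclideanSpace ℝ ι} (h0 : 0 < gaussianSmoothedProb σ S x)
    (h1 : gaussianSmoothedProb σ S x < 1) (hne : gaussianSmoothedProb σ S x ≠ 1 / 2)
    (hδ : ‖δ‖ < σ * |PhiInv (gaussianSmoothedProb σ S x)|) :
    1 / 2 < gaussianSmoothedProb σ S (x + δ) ↔ 1 / 2 < gaussianSmoothedProb σ S x := by
  set p := gaussianSmoothedProb σ S x
  have hPhi : Phi (PhiInv p) = p := Phi_PhiInv h0 h1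
  rcases hne.lt_or_gt with hlt | hgt
  · have hneg : PhiInv p < 0 := by
      rw [← neg_pos, ← half_lt_Phi_iff, Phi_neg, hPhi]
      linarith
    have hcompl := half_lt_gaussianSmoothedProb_add hS.compl hσ (r := -PhiInv p)
      (by rw [Phi_neg, hPhi, gaussianSmoothedProb_compl hS]) (by rwa [← abs_of_neg hneg])
    rw [gaussianSmoothedProb_compl hS] at hcompl
    exact iff_of_false (by linarith) (by linarith)
  · have hpos : 0 < PhiInv p := by rwa [← half_lt_Phi_iff, hPhi]
    exact iff_of_true
      (half_lt_gaussianSmoothedProb_add hS hσ hPhi.le (by rwa [← abs_of_pos hpos])) hgt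

end EuclideanSpace

theorem stmt_16_general
    (n d : ℕ) (σ : ℝ) (hσ : 0 < σ)
    (g : (Fin n → ZMod 2) → EuclideanSpace ℝ (Fin d) → Bool)
    (hg : ∀ b, Measurable (g b))
    (μG : Measure (EuclideanSpace ℝ (Fin d)))
    (hμG : μG = (Measure.pi (fun _ => gaussianReal 0 ⟨σ ^ 2, sq_nonneg σ⟩)).map
      (MeasurableEquiv.toLp 2 (Fin d → ℝ)))
    (h : (Fin n → ZMod 2) → EuclideanSpace ℝ (Fin d) → ℝ)
    (hh : ∀ b x, h b x = (μG {e | g b (x + e) = true}).toReal)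
    (gX : (Fin n → ZMod 2) → EuclideanSpace ℝ (Fin d) → Bool)
    (hgX : ∀ b x, gX b x = true ↔ 1 / 2 < h b x)
    (x : EuclideanSpace ℝ (Fin d))
    (hbx : ∀ b, 0 < h b x ∧ h b x < 1 ∧ h b x ≠ 1 / 2)
    (εX : ℝ)
    (hεXlt : ∀ b, εX < σ * |PhiInv (h b x)|)
    (ν : Measure (Fin n → ZMod 2))
    (a : Fin n → ZMod 2)
    (gAX : (Fin n → ZMod 2) → EuclideanSpace ℝ (Fin d) → Bool)
    (hgAX : ∀ a' x', gAX a' x' = true ↔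
      ν {γ | gX (a' + γ) x' = false} < ν {γ | gX (a' + γ) x' = true})
    (δ : EuclideanSpace ℝ (Fin d)) (hδ : ‖δ‖ ≤ εX) :
    (∀ b, gX b (x + δ) = gX b x) ∧
      ν {γ | gX (a + γ) (x + δ) = true} = ν {γ | gX (a + γ) x = true} ∧
      gAX a (x + δ) = gAX a x := by
  have hsmooth : ∀ b y, h b y = gaussianSmoothedProb σ {z | g b z = true} y := fun b y => by
    rw [hh, hμG, map_toLp_pi_gaussianReal, gaussianSmoothedProb, measureReal_def]
    rfl
  have hinvariant : ∀ b, gX b (x + δ) = gX b x := fun b => by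
    obtain ⟨h0, h1, hne⟩ := hbx b
    have hradius := hδ.trans_lt (hεXlt b)
    rw [hsmooth] at h0 h1 hne hradius
    rw [Bool.eq_iff_iff, hgX, hgX, hsmooth, hsmooth]
    exact half_lt_gaussianSmoothedProb_add_iff (hg b (measurableSet_singleton true)) hσ
      h0 h1 hne hradius
  have hclass : ∀ c, {γ | gX (a + γ) (x + δ) = c} = {γ | gX (a + γ) x = c} := fun c => by
    simp only [hinvariant]
  refine ⟨hinvariant, by rw [hclass], ?_⟩
  rw [Bool.eq_iff_iff, hgAX, hgAX, hclass, hclass]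

/-- **Theorem 4 (Certified Defense Budget for Attribute Perturbations)**: if the attribute
perturbation budget `ε_X` is below the Gaussian-smoothing certified radius
`σ·|Φ⁻¹(h(b,x))|` for every binary-noise realization `b` of the adjacency input, then the
inner smoothed classifier `g̃_X` is invariant pointwise under any attribute perturbation
`δ` with `‖δ‖₂ ≤ ε_X`; consequently, for any distribution `ν` of the binary noise `Γ` and
any `a`, the acceptance probability is unchanged and the doubly smoothed classifier
`g̃_{A,X}` returns the same class. Here `⊕` is coordinatewise XOR (addition in
`ZMod 2`). -/
theorem stmt_16
    (n d : ℕ) (σ : ℝ) (hσ : 0 < σ)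
    (g : (Fin n → ZMod 2) → EuclideanSpace ℝ (Fin d) → Bool)
    (hg : ∀ b, Measurable (g b))
    (μG : Measure (EuclideanSpace ℝ (Fin d)))
    (hμG : μG = (Measure.pi (fun _ => gaussianReal 0 ⟨σ ^ 2, sq_nonneg σ⟩)).map
      (MeasurableEquiv.toLp 2 (Fin d → ℝ)))
    (h : (Fin n → ZMod 2) → EuclideanSpace ℝ (Fin d) → ℝ)
    (hh : ∀ b x, h b x = (μG {e | g b (x + e) = true}).toReal)
    (gX : (Fin n → ZMod 2) → EuclideanSpace ℝ (Fin d) → Bool)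
    (hgX : ∀ b x, gX b x = true ↔ 1 / 2 < h b x)
    (x : EuclideanSpace ℝ (Fin d))
    (hbx : ∀ b, 0 < h b x ∧ h b x < 1 ∧ h b x ≠ 1 / 2)
    (εX : ℝ) (hεX : 0 < εX)
    (hεXlt : ∀ b, εX < σ * |PhiInv (h b x)|)
    (ν : Measure (Fin n → ZMod 2)) [IsProbabilityMeasure ν]
    (a : Fin n → ZMod 2)
    (gAX : (Fin n → ZMod 2) → EuclideanSpace ℝ (Fin d) → Bool)
    (hgAX : ∀ a' x', gAX a' x' = true ↔
      ν {γ | gX (a' + γ) x' = false} < ν {γ | gX (a' + γ) x' = true})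
    (δ : EuclideanSpace ℝ (Fin d)) (hδ : ‖δ‖ ≤ εX) :
    (∀ b, gX b (x + δ) = gX b x) ∧
      ν {γ | gX (a + γ) (x + δ) = true} = ν {γ | gX (a + γ) x = true} ∧
      gAX a (x + δ) = gAX a x :=
  stmt_16_general n d σ hσ g hg μG hμG h hh gX hgX x hbx εX hεXlt ν a gAX hgAX δ hδ
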